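/- Let a group G act on a set X with a global cross section Z whose common isotropy subgroup is G_0, and let N = {g ∈ G : gG_0g^{-1} = G_0} be the normalizer of G_0 in G. Then a subset Z' ⊆ X is a global cross section for the action of G on X if and only if there exist g_0 ∈ G and elements n_z ∈ N for each z ∈ Z such that Z' = {g_0 n_z z : z ∈ Z}. -/

import Mathlib

/-!
Since `stabilizer (g • z) = g (stabilizer z) g⁻¹`, moving each point `z` of `Z` along its orbit
by some `g_z` yields a cross section whose stabilizers are the conjugates `g_z G₀ g_z⁻¹`; these
all agree exactly when every `g_{z₀}⁻¹ g_z` normalizes `G₀`. Conversely, if `Z'` is a cross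
section, choose `g_z` with `g_z • z ∈ Z'`: the moved copy of `Z` is a cross section contained
in `Z'`, hence equal to it.
-/

open MulAction

theorem Subgroup.map_conj_eq_map_conj_iff {G : Type*} [Group G] (H : Subgroup G) (a b : G) :
    H.map (MulAut.conj a).toMonoidHom = H.map (MulAut.conj b).toMonoidHom ↔
      a⁻¹ * b ∈ Subgroup.normalizer (H : Set G) := by
  have hmap (g h : G) : (H.map (MulAut.conj h).toMonoidHom).map (MulAut.conj g).toMonoidHom =
      H.map (MulAut.conj (g * h)).toMonoidHom := by
    rw [Subgroup.map_map, map_mul]; rfl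
  rw [← (Subgroup.map_injective (f := (MulAut.conj a⁻¹).toMonoidHom)
      (MulAut.conj a⁻¹).injective).eq_iff, hmap, hmap, inv_mul_cancel, map_one,
    Subgroup.mem_normalizer_iff_map_conj_eq, eq_comm,
    show (1 : MulAut G).toMonoidHom = MonoidHom.id G from rfl, Subgroup.map_id]
  rfl

namespace MulAction

variable (G : Type*) {X : Type*} [Group G] [MulAction G X]

def IsCrossSection (Z : Set X) : Prop :=
  ∀ x : X, ∃! z, z ∈ Z ∧ z ∈ orbit G x

variable {G}

theorem smul_mem_orbit_iff {g : G} {a b : X} : g • a ∈ orbit G b ↔ a ∈ orbit G b := by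
  rw [← orbit_eq_iff, ← orbit_eq_iff, orbit_smul]

theorem stabilizer_smul_of_stabilizer_eq {H : Subgroup G} {z : X} (hz : stabilizer G z = H)
    (g : G) : stabilizer G (g • z) = H.map (MulAut.conj g).toMonoidHom := by
  rw [stabilizer_smul_eq_stabilizer_map_conj, hz]

namespace IsCrossSection

variable {Z Z' : Set X}

theorem exists_smul_mem (hZ : IsCrossSection G Z) (x : X) : ∃ g : G, g • x ∈ Z := by
  obtain ⟨z, ⟨hz, g, rfl⟩, -⟩ := hZ x
  exact ⟨g, hz⟩

theorem image_smul (hZ : IsCrossSection G Z) (f : X → G) :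
    IsCrossSection G ((fun z => f z • z) '' Z) := by
  intro x
  obtain ⟨z, ⟨hz, hzx⟩, huniq⟩ := hZ x
  refine ⟨f z • z, ⟨Set.mem_image_of_mem _ hz, smul_mem_orbit_iff.2 hzx⟩, ?_⟩
  rintro _ ⟨⟨w, hw, rfl⟩, hwx⟩
  rw [huniq w ⟨hw, smul_mem_orbit_iff.1 hwx⟩]

theorem eq_of_subset (hZ : IsCrossSection G Z) (hZ' : IsCrossSection G Z') (h : Z ⊆ Z') :
    Z = Z' := by
  refine h.antisymm fun x hx => ?_
  obtain ⟨z, ⟨hz, hzx⟩, -⟩ := hZ x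
  obtain ⟨y, -, huniq⟩ := hZ' x
  rwa [huniq x ⟨hx, mem_orbit_self x⟩, ← huniq z ⟨h hz, hzx⟩]

end IsCrossSection

end MulAction

/-- let `Z` be a global cross section for the action of `G` on `X` with
common isotropy subgroup `G₀`, and let `N` be the normalizer of `G₀` in `G`. Then a
subset `Z' ⊆ X` is a global cross section iff `Z' = {g₀ * n_z • z : z ∈ Z}` for some
`g₀ ∈ G` and `n_z ∈ N`, `z ∈ Z`. -/
theorem stmt_12 {G X : Type*} [Group G] [MulAction G X]
    (G₀ : Subgroup G) (Z : Set X)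
    (hcross : ∀ x : X, ∃! z, z ∈ Z ∧ z ∈ MulAction.orbit G x)
    (hglobal : ∀ z ∈ Z, MulAction.stabilizer G z = G₀)
    (Z' : Set X) :
    ((∀ x : X, ∃! z, z ∈ Z' ∧ z ∈ MulAction.orbit G x) ∧
      (∀ z₁ ∈ Z', ∀ z₂ ∈ Z',
        MulAction.stabilizer G z₁ = MulAction.stabilizer G z₂)) ↔
    (∃ g₀ : G, ∃ n : X → G, (∀ z ∈ Z, n z ∈ Subgroup.normalizer (G₀ : Set G)) ∧
      Z' = {x : X | ∃ z ∈ Z, x = (g₀ * n z) • z}) := by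
  have hZ : IsCrossSection G Z := hcross
  have hstab (f : X → G) {z} (hz : z ∈ Z) :=
    stabilizer_smul_of_stabilizer_eq (hglobal z hz) (f z)
  have himage (f : X → G) : {x : X | ∃ z ∈ Z, x = f z • z} = (fun z => f z • z) '' Z := by
    ext; simp only [Set.mem_ofPred_eq, Set.mem_image, eq_comm]
  constructor
  · rintro ⟨hZ' : IsCrossSection G Z', hconst⟩
    choose f hf using fun z => hZ'.exists_smul_mem z
    have hZ'_eq : Z' = (fun z => f z • z) '' Z :=
      ((hZ.image_smul f).eq_of_subset hZ' (Set.image_subset_iff.2 fun z _ => hf z)).symm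
    obtain ⟨g₀, hg₀⟩ : ∃ g₀ : G, ∀ z ∈ Z, g₀⁻¹ * f z ∈ Subgroup.normalizer (G₀ : Set G) := by
      rcases Z.eq_empty_or_nonempty with rfl | ⟨z₀, hz₀⟩
      · exact ⟨1, fun z hz => hz.elim⟩
      · refine ⟨f z₀, fun z hz => (G₀.map_conj_eq_map_conj_iff _ _).1 ?_⟩
        rw [← hstab f hz₀, ← hstab f hz]
        exact hconst _ (hf z₀) _ (hf z)
    refine ⟨g₀, fun z => g₀⁻¹ * f z, hg₀, ?_⟩
    simpa only [mul_inv_cancel_left, himage] using hZ'_eq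
  · rintro ⟨g₀, n, hn, rfl⟩
    rw [himage]
    refine ⟨hZ.image_smul _, ?_⟩
    rintro _ ⟨z₁, hz₁, rfl⟩ _ ⟨z₂, hz₂, rfl⟩
    rw [hstab (g₀ * n ·) hz₁, hstab (g₀ * n ·) hz₂, G₀.map_conj_eq_map_conj_iff, mul_inv_rev,
      mul_assoc, inv_mul_cancel_left]
    exact mul_mem (inv_mem (hn z₁ hz₁)) (hn z₂ hz₂)
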